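/- arXiv:1505.01428 — 5 statements merged into one kernel-verified Lean document; each statement's English description precedes it below -/
import Mathlib

section
/- If ĝ is a left eigenvector of m₁ with eigenvalue λ_g (i.e. Σ_{(a,j)} ĝ(a,j) m₁((a,j),(b,k)) = λ_g ĝ(b,k) for all (b,k)), and g(a) := Σ_{j=1}^{|θ(a)|} ĝ(a,j), then for all (b,k) ∈ 𝒳 one has λ_g ĝ(b,k) = g(θ(b)_k); moreover g is a left eigenvector of M with eigenvalue λ_g, i.e. Σ_a g(a) M_{a,b} = λ_g g(b). -/
open scoped BigOperators

theorem List.sum_get_eq_sum_mul_count {α R : Type*} [Fintype α] [DecidableEq α]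
    [NonAssocSemiring R] (l : List α) (f : α → R) :
    ∑ j : Fin l.length, f (l.get j) = ∑ a : α, f a * (l.count a : R) := by
  calc ∑ j : Fin l.length, f (l.get j) = (l.map f).sum := Fin.sum_univ_fun_getElem l f
    _ = ∑ a ∈ l.toFinset, l.count a • f a := Finset.sum_list_map_count l f
    _ = ∑ a : α, l.count a • f a :=
      Finset.sum_subset (Finset.subset_univ _) fun a _ ha => by
        rw [List.count_eq_zero_of_not_mem (mt List.mem_toFinset.2 ha), zero_smul]
    _ = ∑ a : α, f a * (l.count a : R) := by simp only [nsmul_eq_mul']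

theorem Fintype.sum_sigma_mul_ite_fst_eq {α R : Type*} {β : α → Type*} [Fintype α]
    [DecidableEq α] [∀ a, Fintype (β a)] [NonAssocSemiring R] (f : (Σ a, β a) → R) (c : α) :
    ∑ x : Σ a, β a, f x * (if c = x.1 then 1 else 0) = ∑ j : β c, f ⟨c, j⟩ := by
  rw [← Finset.univ_sigma_univ, Finset.sum_sigma]
  simp [mul_ite, Finset.sum_ite_eq]

/-- If `gh` (ĝ) is a left eigenvector of `m₁` with eigenvalue `λ_g`, and
`g(a) := Σ_{j=1}^{|θ(a)|} ĝ(a,j)`, then `λ_g ĝ(b,k) = g(θ(b)_k)` for all `(b,k) ∈ 𝒳`,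
and `g` is a left eigenvector of the substitution matrix `M` with eigenvalue `λ_g`. -/
theorem stmt3 {A : Type*} [Fintype A] [DecidableEq A]
    (θ : A → List A) (gh : (Σ a : A, Fin (θ a).length) → ℂ) (lg : ℂ)
    (hleft : ∀ y : Σ a : A, Fin (θ a).length,
      ∑ x : Σ a : A, Fin (θ a).length,
        gh x * (if (θ y.1).get y.2 = x.1 then 1 else 0) = lg * gh y) :
    (∀ y : Σ a : A, Fin (θ a).length,
      lg * gh y = ∑ j : Fin (θ ((θ y.1).get y.2)).length, gh ⟨(θ y.1).get y.2, j⟩) ∧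
    (∀ b : A,
      ∑ a : A, (∑ j : Fin (θ a).length, gh ⟨a, j⟩) * ((θ b).count a : ℂ)
        = lg * ∑ j : Fin (θ b).length, gh ⟨b, j⟩) := by
  have hcol : ∀ y : Σ a : A, Fin (θ a).length,
      lg * gh y = ∑ j : Fin (θ ((θ y.1).get y.2)).length, gh ⟨(θ y.1).get y.2, j⟩ :=
    fun y => (hleft y).symm.trans (Fintype.sum_sigma_mul_ite_fst_eq gh _)
  refine ⟨hcol, fun b => ?_⟩
  rw [← List.sum_get_eq_sum_mul_count (θ b) (fun a => ∑ j : Fin (θ a).length, gh ⟨a, j⟩),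
    Finset.mul_sum]
  exact Finset.sum_congr rfl fun j _ => (hcol ⟨b, j⟩).symm
end

section
/- If the substitution θ is primitive (some power of M has all entries positive), then the matrix m₁ on the state space 𝒳 is primitive: there exists k such that m₁^{k+1} has all entries positive. Specifically if for all c,d the letter c occurs in θ^k(d), then m₁^{k+1}((a,i),(b,j)) ≥ 1 for all (a,i),(b,j) ∈ 𝒳. -/
/-! A state `(b, j)` records the `j`-th letter of `θ(b)`, and `m₁` has an edge from `(a, i)` to
`(b, j)` exactly when that letter is `a`. Expanding the letter `θ(b)_j` by `θ^k` therefore yields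
a path of length `k + 1` ending at `(b, j)` from every state whose letter occurs in
`θ^k(θ(b)_j)`; primitivity makes that every state. -/

theorem Matrix.one_le_mul_apply_of_le {l m n : Type*} [Fintype m]
    {M : Matrix l m ℕ} {N : Matrix m n ℕ} {x : l} {y : n} (z : m)
    (hM : 1 ≤ M x z) (hN : 1 ≤ N z y) : 1 ≤ (M * N) x y :=
  calc 1 ≤ M x z * N z y := Nat.mul_le_mul hM hN
    _ ≤ ∑ w, M x w * N w y :=
      Finset.single_le_sum (f := fun w => M x w * N w y) (fun _ _ => Nat.zero_le _)
        (Finset.mem_univ z)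
    _ = (M * N) x y := (Matrix.mul_apply).symm

namespace Substitution

variable {A : Type*}

theorem mem_iterate_flatMap_succ (θ : A → List A) (k : ℕ) (c a : A) :
    a ∈ (fun w : List A => w.flatMap θ)^[k + 1] [c] ↔
      ∃ b ∈ (fun w : List A => w.flatMap θ)^[k] [c], a ∈ θ b := by
  rw [Function.iterate_succ_apply', List.mem_flatMap]

/-- The matrix `m₁` on the states `(a, j)`, `j < |θ(a)|`. -/
def stateMatrix [DecidableEq A] (θ : A → List A) :
    Matrix (Σ a : A, Fin (θ a).length) (Σ a : A, Fin (θ a).length) ℕ :=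
  Matrix.of fun x y => if (θ y.1).get y.2 = x.1 then 1 else 0

theorem one_le_stateMatrix_pow_succ_apply [Fintype A] [DecidableEq A] (θ : A → List A)
    (k : ℕ) (x y : Σ a : A, Fin (θ a).length)
    (hx : x.1 ∈ (fun w : List A => w.flatMap θ)^[k] [(θ y.1).get y.2]) :
    1 ≤ (stateMatrix θ ^ (k + 1)) x y := by
  induction k generalizing x with
  | zero =>
    rw [Function.iterate_zero_apply, List.mem_singleton] at hx
    simp [stateMatrix, hx]
  | succ k ih =>
    obtain ⟨b, hb, hxb⟩ := (mem_iterate_flatMap_succ θ k _ _).mp hx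
    obtain ⟨t, ht⟩ := List.get_of_mem hxb
    have hedge : 1 ≤ stateMatrix θ x ⟨b, t⟩ := by rw [stateMatrix, Matrix.of_apply, if_pos ht]
    rw [pow_succ']
    exact Matrix.one_le_mul_apply_of_le ⟨b, t⟩ hedge (ih ⟨b, t⟩ hb)

end Substitution

/-- If the substitution `θ` is primitive, the matrix `m₁` on the state space `𝒳` is
primitive: if every letter `c` occurs in `θ^k(d)` for all `d`, then all entries of
`m₁^{k+1}` are at least `1`. -/
theorem stmt4 {A : Type*} [Fintype A] [DecidableEq A]
    (θ : A → List A) (k : ℕ)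
    (hprim : ∀ c d : A, c ∈ (fun w : List A => w.flatMap θ)^[k] [d]) :
    ∀ x y : Σ a : A, Fin (θ a).length,
      1 ≤ ((Matrix.of fun x y : Σ a : A, Fin (θ a).length =>
          if (θ y.1).get y.2 = x.1 then (1 : ℕ) else 0) ^ (k + 1)) x y :=
  fun x y => Substitution.one_le_stateMatrix_pow_succ_apply θ k x y (hprim _ _)
end

section
/- For the substitution-path chain, the product P P* of the forward transition operator and its adjoint is a block matrix indexed by the first letter: (𝔭𝔭*)((a,j),(b,k)) = 0 unless a = b. Consequently each diagonal block (for fixed a ∈ 𝒜) is itself a right-stochastic matrix with all entries positive, and the eigenspace of 𝔭𝔭* for eigenvalue 1 has dimension |𝒜|, spanned by functions of the form (a,j) ↦ h(a) for arbitrary h : 𝒜 → ℂ. -/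
/-!
`𝔭` and `𝔭*` are the Doob transforms of `m₁` and its transpose by the Perron eigenvectors, hence
row-stochastic, and so is `𝔭𝔭*`. A step of `𝔭` from `(a,j)` goes to a path `z` whose letter
`θ(z)` is `a`, and a step of `𝔭*` from `z` goes to a path starting with `θ(z)`; so `𝔭𝔭*` only
connects paths with the same first letter, and any two of them through every `z` with `θ(z) = a`
(such `z` exist because `m₁ρ̂ = λρ̂ > 0`). A real harmonic function of a stochastic matrix that is
positive on blocks and zero off them is constant on each block by the maximum principle; over `ℂ`
apply this to the real and imaginary parts.
-/

open Matrix

namespace Matrix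

variable {ι β : Type*}

noncomputable def doobTransform (K : Matrix ι ι ℝ) (v : ι → ℝ) (r : ℝ) : Matrix ι ι ℝ :=
  of fun i j => K i j * v j / (r * v i)

section Doob

variable {K : Matrix ι ι ℝ} {v : ι → ℝ} {r : ℝ}

theorem doobTransform_pos (hr : 0 < r) (hv : ∀ i, 0 < v i) {i j : ι} (hKij : 0 < K i j) :
    0 < doobTransform K v r i j :=
  div_pos (mul_pos hKij (hv j)) (mul_pos hr (hv i))

theorem doobTransform_eq_zero {i j : ι} (hKij : K i j = 0) : doobTransform K v r i j = 0 := by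
  simp [doobTransform, hKij]

theorem doobTransform_nonneg (hr : 0 < r) (hv : ∀ i, 0 < v i) {i j : ι} (hKij : 0 ≤ K i j) :
    0 ≤ doobTransform K v r i j :=
  div_nonneg (mul_nonneg hKij (hv j).le) (mul_pos hr (hv i)).le

variable [Fintype ι]

theorem doobTransform_mem_rowStochastic [DecidableEq ι] (hK : ∀ i j, 0 ≤ K i j) (hr : 0 < r)
    (hv : ∀ i, 0 < v i) (hKv : K *ᵥ v = r • v) : doobTransform K v r ∈ rowStochastic ℝ ι := by
  refine mem_rowStochastic_iff_sum.2 ⟨fun i j => ?_, fun i => ?_⟩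
  · exact doobTransform_nonneg hr hv (hK i j)
  · have hrow : ∑ j, K i j * v j = r * v i := congrFun hKv i
    simp only [doobTransform, of_apply, ← Finset.sum_div, hrow]
    exact div_self (mul_pos hr (hv i)).ne'

end Doob

section Blocks

variable [Fintype ι]
variable {P Q : Matrix ι ι ℝ} {π ℓ : ι → β}

theorem mul_apply_eq_zero_of_ne (hP : ∀ i j, ℓ j ≠ π i → P i j = 0)
    (hQ : ∀ j k, ℓ j ≠ π k → Q j k = 0) {i k : ι} (hik : π i ≠ π k) : (P * Q) i k = 0 := by
  rw [mul_apply]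
  refine Finset.sum_eq_zero fun j _ => ?_
  by_cases hj : ℓ j = π i
  · rw [hQ j k (hj ▸ hik), mul_zero]
  · rw [hP i j hj, zero_mul]

theorem mul_apply_pos_of_eq (hP : ∀ i j, 0 ≤ P i j) (hQ : ∀ j k, 0 ≤ Q j k)
    (hPpos : ∀ i j, ℓ j = π i → 0 < P i j) (hQpos : ∀ j k, ℓ j = π k → 0 < Q j k)
    (hℓ : ∀ i, ∃ j, ℓ j = π i) {i k : ι} (hik : π i = π k) : 0 < (P * Q) i k := by
  obtain ⟨j, hj⟩ := hℓ i
  rw [mul_apply]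
  exact Finset.sum_pos' (fun l _ => mul_nonneg (hP i l) (hQ l k))
    ⟨j, Finset.mem_univ j, mul_pos (hPpos i j hj) (hQpos j k (hj.trans hik))⟩

variable [DecidableEq ι]

theorem eq_of_sum_mul_eq_self (hP : P ∈ rowStochastic ℝ ι)
    (hoff : ∀ i j, π i ≠ π j → P i j = 0) (hon : ∀ i j, π i = π j → 0 < P i j)
    {f : ι → ℝ} (hf : ∀ i, ∑ j, P i j * f j = f i) {i j : ι} (hij : π i = π j) : f i = f j := by
  classical
  obtain ⟨k, hk, hmax⟩ := Finset.exists_max_image {k | π k = π i} f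
    ⟨i, Finset.mem_filter.2 ⟨Finset.mem_univ i, rfl⟩⟩
  have hki : π k = π i := (Finset.mem_filter.1 hk).2
  have hsum : ∑ l, P k l * (f k - f l) = 0 := by
    simp only [mul_sub, Finset.sum_sub_distrib, ← Finset.sum_mul,
      sum_row_of_mem_rowStochastic hP, one_mul, hf, sub_self]
  have hterm : ∀ l, 0 ≤ P k l * (f k - f l) := fun l => by
    by_cases hl : π k = π l
    · exact mul_nonneg (hon k l hl).le
        (sub_nonneg.2 (hmax l (Finset.mem_filter.2 ⟨Finset.mem_univ l, hl ▸ hki⟩)))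
    · rw [hoff k l hl, zero_mul]
  have hblock : ∀ l, π k = π l → f l = f k := fun l hl => by
    have := (Finset.sum_eq_zero_iff_of_nonneg fun l _ => hterm l).1 hsum l (Finset.mem_univ l)
    rcases mul_eq_zero.1 this with h | h
    · exact absurd h (hon k l hl).ne'
    · exact (sub_eq_zero.1 h).symm
  rw [hblock i hki, hblock j (hki.trans hij)]

theorem sum_mul_eq_self_iff (hP : P ∈ rowStochastic ℝ ι)
    (hoff : ∀ i j, π i ≠ π j → P i j = 0) (hon : ∀ i j, π i = π j → 0 < P i j) (h : ι → ℂ) :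
    (∀ i, ∑ j, (P i j : ℂ) * h j = h i) ↔ ∃ g : β → ℂ, ∀ i, h i = g (π i) := by
  constructor
  · intro hh
    have hre : ∀ i, ∑ j, P i j * (h j).re = (h i).re := fun i => by
      simpa only [Complex.re_sum, Complex.re_ofReal_mul] using congrArg Complex.re (hh i)
    have him : ∀ i, ∑ j, P i j * (h j).im = (h i).im := fun i => by
      simpa only [Complex.im_sum, Complex.im_ofReal_mul] using congrArg Complex.im (hh i)
    have hfactor : h.FactorsThrough π := fun i j hij =>
      Complex.ext (eq_of_sum_mul_eq_self hP hoff hon hre hij)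
        (eq_of_sum_mul_eq_self hP hoff hon him hij)
    exact ⟨Function.extend π h 0, fun i => (hfactor.extend_apply 0 i).symm⟩
  · rintro ⟨g, hg⟩ i
    have hblock : ∀ j, (P i j : ℂ) * h j = (P i j : ℂ) * g (π i) := fun j => by
      by_cases hij : π i = π j
      · rw [hg j, hij]
      · simp [hoff i j hij]
    simp only [hblock, ← Finset.sum_mul, ← Complex.ofReal_sum, sum_row_of_mem_rowStochastic hP,
      Complex.ofReal_one, one_mul, hg i]

end Blocks

end Matrix

theorem Fintype.sum_fiber_eq_sum {A : Type*} {κ : A → Type*} [Fintype A] [DecidableEq A]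
    [∀ a, Fintype (κ a)] {M : Type*} [AddCommMonoid M] (u : (Σ a, κ a) → M) (a : A)
    (hu : ∀ y : Σ a, κ a, y.1 ≠ a → u y = 0) : ∑ k, u ⟨a, k⟩ = ∑ y, u y := by
  rw [Fintype.sum_sigma, Finset.sum_eq_single a (fun b _ hb => Finset.sum_eq_zero
    fun k _ => hu ⟨b, k⟩ hb) (fun ha => absurd (Finset.mem_univ a) ha)]

section SubstitutionPaths

variable {A : Type*} [DecidableEq A] {θ : A → List A}

variable (θ) in
/-- The matrix `m₁` on the substitution paths `𝒳 = Σ a, Fin |θ a|`. -/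
def pathIncidence : Matrix (Σ a, Fin (θ a).length) (Σ a, Fin (θ a).length) ℝ :=
  Matrix.of fun x z => if (θ z.1).get z.2 = x.1 then 1 else 0

theorem pathIncidence_pos {x z : Σ a, Fin (θ a).length} (h : (θ z.1).get z.2 = x.1) :
    0 < pathIncidence θ x z := by
  simp only [pathIncidence, of_apply, if_pos h, zero_lt_one]

theorem pathIncidence_eq_zero {x z : Σ a, Fin (θ a).length} (h : (θ z.1).get z.2 ≠ x.1) :
    pathIncidence θ x z = 0 := by
  simp only [pathIncidence, of_apply, if_neg h]

theorem pathIncidence_nonneg (x z : Σ a, Fin (θ a).length) : 0 ≤ pathIncidence θ x z := by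
  by_cases h : (θ z.1).get z.2 = x.1
  · exact (pathIncidence_pos h).le
  · exact (pathIncidence_eq_zero h).ge

theorem exists_get_eq_of_pathIncidence_mulVec [Fintype A] {ρ : (Σ a, Fin (θ a).length) → ℝ}
    {lam : ℝ} (hlam : 0 < lam) (hρ : ∀ x, 0 < ρ x) (h : pathIncidence θ *ᵥ ρ = lam • ρ)
    (x : Σ a, Fin (θ a).length) : ∃ z : Σ a, Fin (θ a).length, (θ z.1).get z.2 = x.1 := by
  by_contra! hx
  have hsum : ∑ z, pathIncidence θ x z * ρ z = lam * ρ x := congrFun h x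
  rw [Finset.sum_eq_zero fun z _ => by rw [pathIncidence_eq_zero (hx z), zero_mul]] at hsum
  exact (mul_pos hlam (hρ x)).ne' hsum.symm

variable [Fintype A] {ρ σ : (Σ a, Fin (θ a).length) → ℝ} {lam : ℝ}

theorem doobTransform_pathIncidence_mul_apply_eq_zero {x y : Σ a, Fin (θ a).length}
    (hxy : x.1 ≠ y.1) :
    (doobTransform (pathIncidence θ) ρ lam * doobTransform (pathIncidence θ)ᵀ σ lam) x y = 0 :=
  mul_apply_eq_zero_of_ne (π := Sigma.fst) (ℓ := fun z => (θ z.1).get z.2)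
    (fun _ _ h => doobTransform_eq_zero (pathIncidence_eq_zero h))
    (fun _ _ h => doobTransform_eq_zero (K := (pathIncidence θ)ᵀ) (pathIncidence_eq_zero h)) hxy

theorem doobTransform_pathIncidence_mul_apply_pos (hlam : 0 < lam) (hρ : ∀ x, 0 < ρ x)
    (hσ : ∀ x, 0 < σ x) (hK : pathIncidence θ *ᵥ ρ = lam • ρ) {x y : Σ a, Fin (θ a).length}
    (hxy : x.1 = y.1) :
    0 < (doobTransform (pathIncidence θ) ρ lam * doobTransform (pathIncidence θ)ᵀ σ lam) x y :=
  mul_apply_pos_of_eq (π := Sigma.fst) (ℓ := fun z => (θ z.1).get z.2)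
    (fun x z => doobTransform_nonneg hlam hρ (pathIncidence_nonneg x z))
    (fun z y => doobTransform_nonneg (K := (pathIncidence θ)ᵀ) hlam hσ (pathIncidence_nonneg y z))
    (fun _ _ h => doobTransform_pos hlam hρ (pathIncidence_pos h))
    (fun _ _ h => doobTransform_pos (K := (pathIncidence θ)ᵀ) hlam hσ (pathIncidence_pos h))
    (exists_get_eq_of_pathIncidence_mulVec hlam hρ hK) hxy

end SubstitutionPaths

theorem stmt7_general {A : Type*} [Fintype A] [DecidableEq A]
    (θ : A → List A)
    (lam : ℝ) (hlam : 0 < lam)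
    (ρ σ : (Σ a : A, Fin (θ a).length) → ℝ)
    (hρpos : ∀ x, 0 < ρ x) (hσpos : ∀ x, 0 < σ x)
    (hright : ∀ x : Σ a : A, Fin (θ a).length,
      ∑ y : Σ a : A, Fin (θ a).length,
        (if (θ y.1).get y.2 = x.1 then (1 : ℝ) else 0) * ρ y = lam * ρ x)
    (hleft : ∀ y : Σ a : A, Fin (θ a).length,
      ∑ x : Σ a : A, Fin (θ a).length,
        σ x * (if (θ y.1).get y.2 = x.1 then (1 : ℝ) else 0) = lam * σ y)
    (p pstar pp : (Σ a : A, Fin (θ a).length) → (Σ a : A, Fin (θ a).length) → ℝ)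
    (hp : ∀ x y, p x y = (if (θ y.1).get y.2 = x.1 then (1 : ℝ) else 0) * ρ y / (lam * ρ x))
    (hpstar : ∀ x y,
      pstar x y = (if (θ x.1).get x.2 = y.1 then (1 : ℝ) else 0) * σ y / (lam * σ x))
    (hpp : ∀ x y, pp x y = ∑ z : Σ a : A, Fin (θ a).length, p x z * pstar z y) :
    (∀ x y : Σ a : A, Fin (θ a).length, x.1 ≠ y.1 → pp x y = 0) ∧
    (∀ x y : Σ a : A, Fin (θ a).length, x.1 = y.1 → 0 < pp x y) ∧
    (∀ x : Σ a : A, Fin (θ a).length, ∑ k : Fin (θ x.1).length, pp x ⟨x.1, k⟩ = 1) ∧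
    (∀ h : (Σ a : A, Fin (θ a).length) → ℂ,
      (∀ x : Σ a : A, Fin (θ a).length,
          ∑ y : Σ a : A, Fin (θ a).length, (pp x y : ℂ) * h y = h x)
        ↔ ∃ g : A → ℂ, ∀ x : Σ a : A, Fin (θ a).length, h x = g x.1) := by
  have hK : pathIncidence θ *ᵥ ρ = lam • ρ := funext hright
  have hKt : (pathIncidence θ)ᵀ *ᵥ σ = lam • σ := by rw [mulVec_transpose]; exact funext hleft
  have hP : of p = doobTransform (pathIncidence θ) ρ lam := ext hp
  have hPstar : of pstar = doobTransform (pathIncidence θ)ᵀ σ lam := ext hpstar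
  have hPP : of pp = of p * of pstar := ext hpp
  rw [hP, hPstar] at hPP
  have hstoch : of pp ∈ rowStochastic ℝ _ := hPP ▸ mul_mem
    (doobTransform_mem_rowStochastic pathIncidence_nonneg hlam hρpos hK)
    (doobTransform_mem_rowStochastic (fun x z => pathIncidence_nonneg z x) hlam hσpos hKt)
  have hoff : ∀ x y : Σ a : A, Fin (θ a).length, x.1 ≠ y.1 → pp x y = 0 := fun x y hxy =>
    (congrFun₂ hPP x y).trans (doobTransform_pathIncidence_mul_apply_eq_zero hxy)
  have hon : ∀ x y : Σ a : A, Fin (θ a).length, x.1 = y.1 → 0 < pp x y := fun x y hxy => by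
    rw [← of_apply pp x y, hPP]
    exact doobTransform_pathIncidence_mul_apply_pos hlam hρpos hσpos hK hxy
  refine ⟨hoff, hon, fun x => ?_, sum_mul_eq_self_iff hstoch hoff hon⟩
  rw [Fintype.sum_fiber_eq_sum _ x.1 fun y hy => hoff x y (Ne.symm hy)]
  exact sum_row_of_mem_rowStochastic hstoch x

/-- For the substitution-path chain, `𝔭𝔭*` is a block matrix indexed by the first
letter: it vanishes off the diagonal blocks, each diagonal block is right-stochastic
with positive entries, and the `1`-eigenspace of `𝔭𝔭*` is exactly the space of
functions of the form `(a,j) ↦ h(a)`. -/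
theorem stmt7 {A : Type*} [Fintype A] [DecidableEq A]
    (θ : A → List A) (hne : ∀ a : A, θ a ≠ [])
    (hprim : ∃ k : ℕ, ∀ a b : A,
      0 < ((Matrix.of fun a b : A => ((θ b).count a : ℝ)) ^ k) a b)
    (lam : ℝ) (hlam : 0 < lam)
    (ρ σ : (Σ a : A, Fin (θ a).length) → ℝ)
    (hρpos : ∀ x, 0 < ρ x) (hσpos : ∀ x, 0 < σ x)
    (hright : ∀ x : Σ a : A, Fin (θ a).length,
      ∑ y : Σ a : A, Fin (θ a).length,
        (if (θ y.1).get y.2 = x.1 then (1 : ℝ) else 0) * ρ y = lam * ρ x)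
    (hleft : ∀ y : Σ a : A, Fin (θ a).length,
      ∑ x : Σ a : A, Fin (θ a).length,
        σ x * (if (θ y.1).get y.2 = x.1 then (1 : ℝ) else 0) = lam * σ y)
    (p pstar pp : (Σ a : A, Fin (θ a).length) → (Σ a : A, Fin (θ a).length) → ℝ)
    (hp : ∀ x y, p x y = (if (θ y.1).get y.2 = x.1 then (1 : ℝ) else 0) * ρ y / (lam * ρ x))
    (hpstar : ∀ x y,
      pstar x y = (if (θ x.1).get x.2 = y.1 then (1 : ℝ) else 0) * σ y / (lam * σ x))
    (hpp : ∀ x y, pp x y = ∑ z : Σ a : A, Fin (θ a).length, p x z * pstar z y) :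
    (∀ x y : Σ a : A, Fin (θ a).length, x.1 ≠ y.1 → pp x y = 0) ∧
    (∀ x y : Σ a : A, Fin (θ a).length, x.1 = y.1 → 0 < pp x y) ∧
    (∀ x : Σ a : A, Fin (θ a).length, ∑ k : Fin (θ x.1).length, pp x ⟨x.1, k⟩ = 1) ∧
    (∀ h : (Σ a : A, Fin (θ a).length) → ℂ,
      (∀ x : Σ a : A, Fin (θ a).length,
          ∑ y : Σ a : A, Fin (θ a).length, (pp x y : ℂ) * h y = h x)
        ↔ ∃ g : A → ℂ, ∀ x : Σ a : A, Fin (θ a).length, h x = g x.1) :=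
  stmt7_general θ lam hlam ρ σ hρpos hσpos hright hleft p pstar pp hp hpstar hpp
end

section
/- Let p be a primitive right-stochastic matrix on a finite set 𝒳 with invariant measure π, λ ∈ ℂ with |λ| = 1 and λ ≠ 1. Then the operator I − λP on ℂ^𝒳 is invertible, so for any g : 𝒳 → ℂ there is a unique h with g = h − λPh. -/
/-!
If `h = λ P h`, then `h = λᵏ Pᵏ h`, where the row `x₀` of `Pᵏ` at which `|h|` is maximal has
positive entries summing to one. Since `|λ| = 1`, the weighted average `∑ Pᵏ(x₀, y) h(y)` has
the maximal modulus `|h(x₀)|`, which by strict convexity of `‖·‖²` forces `h` to be constant;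
a constant solution of `h = λ P h` vanishes because `λ ≠ 1`. So `I − λP` is injective, hence
invertible on the finite-dimensional space `ℂ^S`.
-/

open Finset Matrix

lemma strictConvexOn_norm_sq {E : Type*} [NormedAddCommGroup E] [InnerProductSpace ℝ E] :
    StrictConvexOn ℝ Set.univ (fun x : E ↦ ‖x‖ ^ 2) := by
  have : StrongConvexOn Set.univ 2 (fun x : E ↦ ‖x‖ ^ 2) := by
    rw [strongConvexOn_iff_convex]
    simpa using convexOn_const (0 : ℝ) convex_univ
  exact this.strictConvexOn two_pos

lemma eq_of_norm_le_norm_sum_smul {ι E : Type*} [Fintype ι] [NormedAddCommGroup E]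
    [InnerProductSpace ℝ E] {w : ι → ℝ} {v : ι → E} (hw₀ : ∀ i, 0 < w i) (hw₁ : ∑ i, w i = 1)
    (hv : ∀ i, ‖v i‖ ≤ ‖∑ i, w i • v i‖) (i j : ι) : v i = v j := by
  refine strictConvexOn_norm_sq.eq_of_le_map_sum (fun i _ ↦ hw₀ i) hw₁
    (fun _ _ ↦ Set.mem_univ _) ?_ (mem_univ i) (mem_univ j)
  calc ∑ i, w i • ‖v i‖ ^ 2 ≤ ∑ i, w i • ‖∑ i, w i • v i‖ ^ 2 := by
        gcongr with i
        · exact (hw₀ i).le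
        · exact hv i
    _ = ‖∑ i, w i • v i‖ ^ 2 := by rw [← sum_smul, hw₁, one_smul]

namespace Matrix

variable {S : Type*} [Fintype S]

lemma pow_mulVec_of_mulVec_eq_smul [DecidableEq S] {R : Type*} [CommSemiring R]
    {A : Matrix S S R} {v : S → R} {μ : R} (h : A *ᵥ v = μ • v) (k : ℕ) :
    A ^ k *ᵥ v = μ ^ k • v := by
  induction k with
  | zero => simp
  | succ k ih => rw [pow_succ', ← mulVec_mulVec, ih, mulVec_smul, h, smul_smul, pow_succ]

lemma map_ofReal_mulVec_apply (Q : Matrix S S ℝ) (h : S → ℂ) (x : S) :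
    (Q.map (↑) *ᵥ h) x = ∑ y, Q x y • h y := by
  simp [mulVec, dotProduct, Complex.real_smul]

lemma sum_apply_eq_one {Q : Matrix S S ℝ} (hrow : Q *ᵥ 1 = 1) (x : S) : ∑ y, Q x y = 1 := by
  simpa [mulVec, dotProduct] using congrFun hrow x

lemma eq_of_map_ofReal_mulVec_eq_smul {Q : Matrix S S ℝ} (hpos : ∀ x y, 0 < Q x y)
    (hrow : Q *ᵥ 1 = 1) {μ : ℂ} (hμ : ‖μ‖ = 1) {h : S → ℂ} (heig : Q.map (↑) *ᵥ h = μ • h)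
    (x y : S) : h x = h y := by
  have : Nonempty S := ⟨x⟩
  obtain ⟨x₀, hx₀⟩ := Finite.exists_max fun y ↦ ‖h y‖
  refine eq_of_norm_le_norm_sum_smul (w := Q x₀) (hpos x₀) ?_ (fun y ↦ ?_) x y
  · exact sum_apply_eq_one hrow x₀
  · rw [← map_ofReal_mulVec_apply, heig, Pi.smul_apply, norm_smul, hμ, one_mul]
    exact hx₀ y

theorem eq_zero_of_smul_mulVec_eq_self [DecidableEq S] {P : Matrix S S ℝ} (hrow : P *ᵥ 1 = 1)
    (hprim : ∃ k : ℕ, ∀ x y, 0 < (P ^ k) x y) {lam : ℂ} (hlam : ‖lam‖ = 1) (hne : lam ≠ 1)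
    {h : S → ℂ} (heq : lam • (P.map (↑) *ᵥ h) = h) : h = 0 := by
  obtain ⟨k, hk⟩ := hprim
  have hlam₀ : lam ≠ 0 := norm_ne_zero_iff.mp (by rw [hlam]; exact one_ne_zero)
  have heig : P.map (↑) *ᵥ h = lam⁻¹ • h := by
    conv_rhs => rw [← heq]
    rw [smul_smul, inv_mul_cancel₀ hlam₀, one_smul]
  have hconst : ∀ x y, h x = h y := by
    refine eq_of_map_ofReal_mulVec_eq_smul hk ?_ (μ := lam⁻¹ ^ k) (by simp [hlam]) ?_
    · simpa using pow_mulVec_of_mulVec_eq_smul (A := P) (μ := 1) (by rwa [one_smul]) k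
    · exact (Matrix.map_pow P Complex.ofRealHom k).symm ▸ pow_mulVec_of_mulVec_eq_smul heig k
  have hfix : P.map (↑) *ᵥ h = h := funext fun x ↦ by
    rw [map_ofReal_mulVec_apply, sum_congr rfl fun y _ ↦ by rw [hconst y x], ← sum_smul,
      sum_apply_eq_one hrow, one_smul]
  rw [hfix] at heq
  have : (lam - 1) • h = 0 := by rw [sub_smul, heq, one_smul, sub_self]
  exact (smul_eq_zero.mp this).resolve_left (sub_ne_zero.mpr hne)

end Matrix

theorem stmt14_general {S : Type*} [Fintype S] [DecidableEq S]
    (p : S → S → ℝ)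
    (hrow : ∀ x, ∑ y, p x y = 1)
    (hprim : ∃ k : ℕ, ∀ x y : S, 0 < ((Matrix.of p) ^ k) x y)
    (lam : ℂ) (hlam : ‖lam‖ = 1) (hne : lam ≠ 1) :
    ∀ g : S → ℂ, ∃! h : S → ℂ, ∀ x, g x = h x - lam * ∑ y, (p x y : ℂ) * h y := by
  intro g
  set M : Matrix S S ℂ := 1 - lam • (Matrix.of p).map (↑)
  have hM : ∀ h, M *ᵥ h = h - lam • ((Matrix.of p).map (↑) *ᵥ h) := fun h ↦ by
    rw [sub_mulVec, one_mulVec, smul_mulVec]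
  have hrow' : Matrix.of p *ᵥ 1 = 1 := funext fun x ↦ by simpa [mulVec, dotProduct] using hrow x
  have hinj : Function.Injective M.mulVec := fun a b hab ↦ by
    have hker : M *ᵥ (a - b) = 0 := by rw [mulVec_sub, hab, sub_self]
    rw [hM, sub_eq_zero] at hker
    exact sub_eq_zero.mp (eq_zero_of_smul_mulVec_eq_self hrow' hprim hlam hne hker.symm)
  have hbij : Function.Bijective M.mulVec :=
    ⟨hinj, mulVec_surjective_iff_isUnit.mpr (mulVec_injective_iff_isUnit.mp hinj)⟩
  refine (existsUnique_congr fun h ↦ ?_).mp (hbij.existsUnique g)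
  simp [hM, funext_iff, eq_comm, map_ofReal_mulVec_apply, Complex.real_smul]

/-- For a primitive right-stochastic matrix `p` on a finite set and `λ` with `|λ| = 1`,
`λ ≠ 1`, the operator `I − λP` is invertible: for every `g` there is a unique `h` with
`g = h − λPh`. -/
theorem stmt14 {S : Type*} [Fintype S] [DecidableEq S]
    (p : S → S → ℝ)
    (hp : ∀ x y, 0 ≤ p x y) (hrow : ∀ x, ∑ y, p x y = 1)
    (hprim : ∃ k : ℕ, ∀ x y : S, 0 < ((Matrix.of p) ^ k) x y)
    (lam : ℂ) (hlam : ‖lam‖ = 1) (hne : lam ≠ 1) :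
    ∀ g : S → ℂ, ∃! h : S → ℂ, ∀ x, g x = h x - lam * ∑ y, (p x y : ℂ) * h y :=
  stmt14_general p hrow hprim lam hlam hne
end

section
/- Let (X_n) be a stationary finite-state Markov chain, λ ∈ ℂ with |λ| = 1, g = f − ∫f dπ, and suppose f = ∫f dπ + h − λPh for some h with P*Ph = h. Then almost surely, for every N, |Σ_{i=1}^N λ^i (f(X_i) − ∫f dπ)| ≤ 2‖h‖_∞. -/
open scoped BigOperators ComplexConjugate
open MeasureTheory Finset Complex

/-!
Since `P*` is the adjoint of `P` in `L²(π)`, the equation `P*Ph = h` gives `‖Ph‖_π = ‖h‖_π`.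
By stationarity, `‖h‖²_π - ‖Ph‖²_π = Σₓ π(x) Σ_y p(x,y) |h(y) - Ph(x)|²`, so `h(y) = Ph(x)`
whenever `p(x,y) > 0`. Almost surely the chain only makes such transitions, and then
`λⁱ (f(Xᵢ) - D) = λⁱ h(Xᵢ) - λⁱ⁺¹ h(Xᵢ₊₁)`: the sum telescopes to two terms of modulus `≤ ‖h‖_∞`.
-/

noncomputable section Kernel

variable {S : Type*} [Fintype S] (p : S → S → ℝ) (π : S → ℝ)

def markovOp (h : S → ℂ) (x : S) : ℂ := ∑ y, (p x y : ℂ) * h y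

def markovAdjoint (u : S → ℂ) (x : S) : ℂ := ∑ y, ((p y x * π y / π x : ℝ) : ℂ) * u y

variable {p π}

lemma conj_markovOp (h : S → ℂ) (x : S) :
    conj (markovOp p h x) = ∑ y, (p x y : ℂ) * conj (h y) := by
  simp [markovOp, map_sum, conj_ofReal]

lemma sum_mul_normSq_sub_markovOp {x : S} (hrow : ∑ y, p x y = 1) (h : S → ℂ) :
    ∑ y, p x y * normSq (h y - markovOp p h x)
      = ∑ y, p x y * normSq (h y) - normSq (markovOp p h x) := by
  have hcross : ∑ y, p x y * (h y * conj (markovOp p h x)).re = normSq (markovOp p h x) := by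
    simp only [← re_ofReal_mul, ← re_sum, ← mul_assoc, ← sum_mul]
    exact congrArg re (mul_conj _) |>.trans (ofReal_re _)
  simp only [normSq_sub, mul_sub, mul_add, sum_sub_distrib, sum_add_distrib, ← sum_mul, hrow,
    mul_left_comm _ (2 : ℝ), ← mul_sum, hcross]
  ring

lemma sum_mul_sum_of_stationary (hinv : ∀ y, ∑ x, π x * p x y = π y) (u : S → ℝ) :
    ∑ x, π x * ∑ y, p x y * u y = ∑ y, π y * u y := by
  simp only [mul_sum, ← mul_assoc]
  rw [sum_comm]
  simp only [← sum_mul, hinv]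

lemma sum_mul_normSq_markovOp_of_markovAdjoint (hπ : ∀ x, π x ≠ 0) {h : S → ℂ}
    (hfix : ∀ x, markovAdjoint p π (markovOp p h) x = h x) :
    ∑ x, π x * normSq (markovOp p h x) = ∑ x, π x * normSq (h x) := by
  apply ofReal_injective
  simp only [ofReal_sum, ofReal_mul, normSq_eq_conj_mul_self]
  calc ∑ y, (π y : ℂ) * (conj (markovOp p h y) * markovOp p h y)
      = ∑ y, ∑ x, (p y x * π y : ℝ) * conj (h x) * markovOp p h y := by
        simp only [conj_markovOp, sum_mul, mul_sum]
        refine sum_congr rfl fun y _ => sum_congr rfl fun x _ => ?_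
        push_cast; ring
    _ = ∑ x, ∑ y, (π x : ℂ) * conj (h x) * (((p y x * π y / π x : ℝ) : ℂ) * markovOp p h y) := by
        rw [sum_comm]
        refine sum_congr rfl fun x _ => sum_congr rfl fun y _ => ?_
        have : (π x : ℂ) ≠ 0 := ofReal_ne_zero.mpr (hπ x)
        push_cast
        field_simp
    _ = ∑ x, (π x : ℂ) * (conj (h x) * h x) := by
        simp only [← mul_sum]
        refine sum_congr rfl fun x _ => ?_
        rw [← hfix x, markovAdjoint]
        ring

lemma eq_markovOp_of_markovAdjoint (hp : ∀ x y, 0 ≤ p x y) (hrow : ∀ x, ∑ y, p x y = 1)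
    (hπ : ∀ x, 0 < π x) (hinv : ∀ y, ∑ x, π x * p x y = π y) {h : S → ℂ}
    (hfix : ∀ x, markovAdjoint p π (markovOp p h) x = h x) {x y : S} (hxy : p x y ≠ 0) :
    h y = markovOp p h x := by
  have hvar : ∑ x, π x * ∑ y, p x y * normSq (h y - markovOp p h x) = 0 := by
    simp only [sum_mul_normSq_sub_markovOp (hrow _), mul_sub, sum_sub_distrib,
      sum_mul_sum_of_stationary hinv, sum_mul_normSq_markovOp_of_markovAdjoint
        (fun x => (hπ x).ne') hfix, sub_self]
  have hterm_nonneg : ∀ x y, 0 ≤ p x y * normSq (h y - markovOp p h x) :=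
    fun x y => mul_nonneg (hp x y) (normSq_nonneg _)
  have hx : ∑ y, p x y * normSq (h y - markovOp p h x) = 0 := by
    have := (sum_eq_zero_iff_of_nonneg fun x _ =>
      mul_nonneg (hπ x).le (sum_nonneg fun y _ => hterm_nonneg x y)).mp hvar x (mem_univ x)
    exact (mul_eq_zero.mp this).resolve_left (hπ x).ne'
  have hxy' := (sum_eq_zero_iff_of_nonneg fun y _ => hterm_nonneg x y).mp hx y (mem_univ y)
  exact sub_eq_zero.mp (normSq_eq_zero.mp ((mul_eq_zero.mp hxy').resolve_left hxy))

lemma sum_pow_mul_sub_eq_of_coboundary {lam D : ℂ} {f h : S → ℂ}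
    (hcob : ∀ x, f x = D + h x - lam * markovOp p h x) {x : ℕ → S}
    (hx : ∀ i, 1 ≤ i → h (x (i + 1)) = markovOp p h (x i)) {N : ℕ} (hN : 1 ≤ N) :
    ∑ i ∈ Icc 1 N, lam ^ i * (f (x i) - D)
      = lam ^ 1 * h (x 1) - lam ^ (N + 1) * h (x (N + 1)) := by
  calc ∑ i ∈ Icc 1 N, lam ^ i * (f (x i) - D)
      = ∑ i ∈ Icc 1 N, -(lam ^ (i + 1) * h (x (i + 1)) - lam ^ i * h (x i)) :=
        sum_congr rfl fun i hi => by rw [hcob, ← hx i (mem_Icc.mp hi).1]; ring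
    _ = _ := by rw [sum_neg_distrib, sum_Icc_sub hN fun i => lam ^ i * h (x i), neg_sub]

end Kernel

lemma ae_transition_ne_zero {S : Type*} [Fintype S] {Ω : Type*} [MeasurableSpace Ω]
    {μ : Measure Ω} {X : ℕ → Ω → S} {p : S → S → ℝ} {π : S → ℝ}
    (hmarkov : ∀ (n : ℕ) (x : ℕ → S), 1 ≤ n →
      μ {ω | ∀ i ∈ Icc 1 n, X i ω = x i}
        = ENNReal.ofReal (π (x 1) * ∏ i ∈ Ico 1 n, p (x i) (x (i + 1)))) :
    ∀ᵐ ω ∂μ, ∀ n, 1 ≤ n → p (X n ω) (X (n + 1) ω) ≠ 0 := by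
  refine ae_all_iff.mpr fun n => ?_
  rcases Nat.eq_zero_or_pos n with rfl | hn
  · exact Filter.Eventually.of_forall fun _ h => absurd h (by norm_num)
  -- cover `Ω` by the finitely many cylinders of length `n + 1`
  let path (c : Fin (n + 2) → S) (i : ℕ) : S := c (Fin.ofNat (n + 2) i)
  let cyl (c : Fin (n + 2) → S) : Set Ω := {ω | ∀ i ∈ Icc 1 (n + 1), X i ω = path c i}
  have hpath : ∀ ω, ∀ i ≤ n + 1, path (fun j => X j ω) i = X i ω := fun ω i hi => by
    simp [path, Fin.ofNat, Nat.mod_eq_of_lt (Nat.lt_succ_of_le hi)]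
  have hcover : ∀ ω, ω ∈ cyl (fun j => X j ω) := fun ω i hi =>
    (hpath ω i (mem_Icc.mp hi).2).symm
  rw [ae_iff]
  refine measure_mono_null
    (t := ⋃ c : Fin (n + 2) → S, cyl c ∩ {ω | p (X n ω) (X (n + 1) ω) = 0})
    (fun ω hω => Set.mem_iUnion.mpr
      ⟨fun j : Fin (n + 2) => X j ω, hcover ω, not_not.mp (Classical.not_imp.mp hω).2⟩)
    (measure_iUnion_null fun c => ?_)
  by_cases hc : p (path c n) (path c (n + 1)) = 0
  · refine measure_mono_null Set.inter_subset_left ?_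
    rw [hmarkov (n + 1) (path c) (by omega), prod_eq_zero (i := n) (by simp; omega) hc,
      mul_zero, ENNReal.ofReal_zero]
  · refine measure_mono_null (fun ω ⟨hω, hω'⟩ => hc ?_) measure_empty
    simpa [hω n (by simp; omega), hω (n + 1) (by simp)] using hω'

theorem stmt16_general {S : Type*} [Fintype S]
    {Ω : Type*} [MeasurableSpace Ω] (μ : Measure Ω)
    (X : ℕ → Ω → S)
    (p : S → S → ℝ) (π : S → ℝ)
    (hp : ∀ x y, 0 ≤ p x y) (hrow : ∀ x, ∑ y, p x y = 1)
    (hπpos : ∀ x, 0 < π x)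
    (hinv : ∀ y, ∑ x, π x * p x y = π y)
    (hmarkov : ∀ (n : ℕ) (x : ℕ → S), 1 ≤ n →
      μ {ω | ∀ i ∈ Finset.Icc 1 n, X i ω = x i}
        = ENNReal.ofReal (π (x 1) * ∏ i ∈ Finset.Ico 1 n, p (x i) (x (i + 1))))
    (lam : ℂ) (hlam : ‖lam‖ = 1)
    (f h : S → ℂ) (D : ℂ)
    (hcob : ∀ x, f x = D + h x - lam * ∑ y, (p x y : ℂ) * h y)
    (hfix : ∀ x, (∑ y, ((p y x * π y / π x : ℝ) : ℂ) * ∑ z, (p y z : ℂ) * h z) = h x) :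
    ∀ᵐ ω ∂μ, ∀ N : ℕ, 1 ≤ N →
      ‖∑ i ∈ Finset.Icc 1 N, lam ^ i * (f (X i ω) - D)‖ ≤ 2 * ⨆ x : S, ‖h x‖ := by
  filter_upwards [ae_transition_ne_zero hmarkov] with ω hω N hN
  have hstep : ∀ i, 1 ≤ i → h (X (i + 1) ω) = markovOp p h (X i ω) := fun i hi =>
    eq_markovOp_of_markovAdjoint hp hrow hπpos hinv hfix (hω i hi)
  have hbound : ∀ i, ‖lam ^ i * h (X i ω)‖ ≤ ⨆ x, ‖h x‖ := fun i => by
    rw [norm_mul, norm_pow, hlam, one_pow, one_mul]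
    exact le_ciSup (Set.finite_range fun x => ‖h x‖).bddAbove _
  rw [sum_pow_mul_sub_eq_of_coboundary hcob hstep hN]
  linarith [norm_sub_le (lam ^ 1 * h (X 1 ω)) (lam ^ (N + 1) * h (X (N + 1) ω)),
    hbound 1, hbound (N + 1)]

/-- For a stationary finite-state Markov chain, `λ` with `|λ| = 1`, and `f` satisfying
the coboundary equation `f = ∫f dπ + h − λPh` with `P*Ph = h`, almost surely
`|Σ_{i=1}^N λ^i (f(X_i) − ∫f dπ)| ≤ 2‖h‖_∞` for every `N`. -/
theorem stmt16 {S : Type*} [Fintype S] [Nonempty S]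
    [MeasurableSpace S] [MeasurableSingletonClass S]
    {Ω : Type*} [MeasurableSpace Ω] (μ : Measure Ω) [IsProbabilityMeasure μ]
    (X : ℕ → Ω → S) (hX : ∀ n, Measurable (X n))
    (p : S → S → ℝ) (π : S → ℝ)
    (hp : ∀ x y, 0 ≤ p x y) (hrow : ∀ x, ∑ y, p x y = 1)
    (hπpos : ∀ x, 0 < π x) (hπ : ∑ x, π x = 1)
    (hinv : ∀ y, ∑ x, π x * p x y = π y)
    (hmarkov : ∀ (n : ℕ) (x : ℕ → S), 1 ≤ n →
      μ {ω | ∀ i ∈ Finset.Icc 1 n, X i ω = x i}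
        = ENNReal.ofReal (π (x 1) * ∏ i ∈ Finset.Ico 1 n, p (x i) (x (i + 1))))
    (lam : ℂ) (hlam : ‖lam‖ = 1)
    (f h : S → ℂ) (D : ℂ) (hD : D = ∑ x, f x * ((π x : ℝ) : ℂ))
    (hcob : ∀ x, f x = D + h x - lam * ∑ y, (p x y : ℂ) * h y)
    (hfix : ∀ x, (∑ y, ((p y x * π y / π x : ℝ) : ℂ) * ∑ z, (p y z : ℂ) * h z) = h x) :
    ∀ᵐ ω ∂μ, ∀ N : ℕ, 1 ≤ N →
      ‖∑ i ∈ Finset.Icc 1 N, lam ^ i * (f (X i ω) - D)‖ ≤ 2 * ⨆ x : S, ‖h x‖ :=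
  stmt16_general μ X p π hp hrow hπpos hinv hmarkov lam hlam f h D hcob hfix
end
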